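/- The connection matrix L of the Möbius–Kantor graph MK (viewed as a real symmetric 40×40 matrix) has exactly 16 positive eigenvalues and exactly 24 negative eigenvalues (and no zero eigenvalue); in particular, its signature 16 − 24 = −8 equals the Euler characteristic |V| − |E| of MK. -/

import Mathlib

/-- The underlying relation of the Möbius–Kantor graph `GP(8,3)`. -/
def mkRel (v w : ZMod 8 × Fin 2) : Bool :=
  (v.2 == 0 && w.2 == 0 && (w.1 == v.1 + 1 || v.1 == w.1 + 1)) ||
  ((v.2 == 0 && w.2 == 1 || v.2 == 1 && w.2 == 0) && v.1 == w.1) ||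
  (v.2 == 1 && w.2 == 1 && (w.1 == v.1 + 3 || v.1 == w.1 + 3))

/-- The Möbius–Kantor graph, i.e. the generalized Petersen graph `GP(8,3)`. -/
def MK : SimpleGraph (ZMod 8 × Fin 2) where
  Adj v w := mkRel v w = true
  symm := ⟨by intro v w; revert v w; decide⟩
  loopless := ⟨by intro v; revert v; decide⟩

instance : DecidableRel MK.Adj := fun v w => inferInstanceAs (Decidable (mkRel v w = true))

/-- A simplex of the (one-dimensional) simplicial complex of `MK`: either a vertex
(a singleton) or an edge (a two-element set of adjacent vertices). -/
def IsMKSimplex (s : Finset (ZMod 8 × Fin 2)) : Prop :=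
  s.card = 1 ∨ ∃ a b, MK.Adj a b ∧ s = {a, b}

instance (s : Finset (ZMod 8 × Fin 2)) : Decidable (IsMKSimplex s) := by
  unfold IsMKSimplex; infer_instance

/-- The type of the 40 simplices (16 vertices and 24 edges) of `MK`. -/
def MKSimplex := {s : Finset (ZMod 8 × Fin 2) // IsMKSimplex s}

instance : Fintype MKSimplex := by unfold MKSimplex; infer_instance
instance : DecidableEq MKSimplex := by unfold MKSimplex; infer_instance

/-- The connection matrix of `MK`: `L x y = 1` if the simplices `x` and `y`
intersect, and `0` otherwise. -/
def connL : Matrix MKSimplex MKSimplex ℤ :=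
  fun x y => if (x.val ∩ y.val).Nonempty then 1 else 0
/-- The connection matrix of `MK` viewed as a real symmetric matrix. -/
def connLR : Matrix MKSimplex MKSimplex ℝ :=
  fun x y => if (x.val ∩ y.val).Nonempty then 1 else 0

/-!
For simplices `s, t` of dimension at most one, `#(s ∩ t)` is `0` or `1` unless `s = t`, so the
connection matrix is `L = Bᵀ B - diag (#s - 1)` with `B` the vertex–simplex incidence matrix, and
`xᵀ L x = ‖B x‖² - ∑_{edges e} x_e²`. This form is positive definite on the vectors supported on the
vertices (a copy of `ℝ^V`) and negative definite on `ker B`, which has dimension `#S - #V = #E`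
because `B` is surjective. By Sylvester's law of inertia, `L` has `#V` positive and `#E` negative
eigenvalues, and none vanishes.
-/

open Matrix Module Finset

section Inertia

lemma finrank_le_card_pos_of_sum_sq_pos {ι E : Type*} [Fintype ι] [AddCommGroup E] [Module ℝ E]
    [FiniteDimensional ℝ E] (d : ι → ℝ) (f : E →ₗ[ℝ] ι → ℝ)
    (hf : ∀ x ≠ 0, 0 < ∑ i, d i * f x i ^ 2) :
    finrank ℝ E ≤ Fintype.card {i // 0 < d i} := by
  let g : E →ₗ[ℝ] {i // 0 < d i} → ℝ := (LinearMap.funLeft ℝ ℝ Subtype.val).comp f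
  have hg : Function.Injective g := by
    refine (injective_iff_map_eq_zero g).mpr fun x hx => ?_
    by_contra hx0
    have hvanish : ∀ i, 0 < d i → f x i = 0 := fun i hi => congrFun hx ⟨i, hi⟩
    have hnonpos : ∑ i, d i * f x i ^ 2 ≤ 0 := by
      refine sum_nonpos fun i _ => ?_
      by_cases hi : 0 < d i
      · simp [hvanish i hi]
      · exact mul_nonpos_of_nonpos_of_nonneg (not_lt.mp hi) (sq_nonneg _)
    exact (hf x hx0).not_ge hnonpos
  simpa using LinearMap.finrank_le_finrank_of_injective hg

variable {n : Type*} [Fintype n] [DecidableEq n] {A : Matrix n n ℝ}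

lemma Matrix.IsHermitian.dotProduct_mulVec_self_eq_sum (hA : A.IsHermitian) (x : n → ℝ) :
    x ⬝ᵥ (A *ᵥ x) = ∑ i, hA.eigenvalues i *
      (((hA.eigenvectorUnitary : Matrix n n ℝ)ᴴ *ᵥ x) i) ^ 2 := by
  set U : Matrix n n ℝ := (hA.eigenvectorUnitary : Matrix n n ℝ) with hU
  have hxU : x ᵥ* U = Uᴴ *ᵥ x := by
    rw [conjTranspose_eq_transpose_of_trivial, mulVec_transpose]
  conv_lhs => rw [hA.spectral_theorem]
  rw [Unitary.conjStarAlgAut_apply, ← hU, ← mulVec_mulVec, ← mulVec_mulVec, dotProduct_mulVec,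
    hxU, RCLike.ofReal_real_eq_id, star_eq_conjTranspose]
  simp only [dotProduct, mulVec_diagonal, Function.comp_apply, id_eq]
  exact sum_congr rfl fun i _ => by ring

lemma Matrix.IsHermitian.finrank_le_card_pos_eigenvalues (hA : A.IsHermitian)
    (W : Submodule ℝ (n → ℝ)) (hW : ∀ x ∈ W, x ≠ 0 → 0 < x ⬝ᵥ (A *ᵥ x)) :
    finrank ℝ W ≤ Fintype.card {i // 0 < hA.eigenvalues i} := by
  refine finrank_le_card_pos_of_sum_sq_pos _
    ((hA.eigenvectorUnitary : Matrix n n ℝ)ᴴ.mulVecLin ∘ₗ W.subtype) fun x hx => ?_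
  have h := hW x x.2 (by simpa using hx)
  rwa [hA.dotProduct_mulVec_self_eq_sum] at h

lemma Matrix.IsHermitian.finrank_le_card_neg_eigenvalues (hA : A.IsHermitian)
    (W : Submodule ℝ (n → ℝ)) (hW : ∀ x ∈ W, x ≠ 0 → x ⬝ᵥ (A *ᵥ x) < 0) :
    finrank ℝ W ≤ Fintype.card {i // hA.eigenvalues i < 0} := by
  have h := finrank_le_card_pos_of_sum_sq_pos (fun i => -hA.eigenvalues i)
    ((hA.eigenvectorUnitary : Matrix n n ℝ)ᴴ.mulVecLin ∘ₗ W.subtype) fun x hx => by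
      have h := hW x x.2 (by simpa using hx)
      rw [hA.dotProduct_mulVec_self_eq_sum] at h
      simp only [neg_mul, sum_neg_distrib, neg_pos]
      exact h
  simpa only [neg_pos] using h

theorem Matrix.IsHermitian.inertia_of_finrank_add_finrank_eq_card (hA : A.IsHermitian)
    (P N : Submodule ℝ (n → ℝ)) (hP : ∀ x ∈ P, x ≠ 0 → 0 < x ⬝ᵥ (A *ᵥ x))
    (hN : ∀ x ∈ N, x ≠ 0 → x ⬝ᵥ (A *ᵥ x) < 0)
    (hdim : finrank ℝ P + finrank ℝ N = Fintype.card n) :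
    {i | 0 < hA.eigenvalues i}.ncard = finrank ℝ P ∧
      {i | hA.eigenvalues i < 0}.ncard = finrank ℝ N ∧ ∀ i, hA.eigenvalues i ≠ 0 := by
  have hpos := hA.finrank_le_card_pos_eigenvalues P hP
  have hneg := hA.finrank_le_card_neg_eigenvalues N hN
  have hsplit := Fintype.card_subtype_or_disjoint (fun i => 0 < hA.eigenvalues i)
    (fun i => hA.eigenvalues i < 0) fun p hp hn i hi => (hp i hi).not_gt (hn i hi)
  have hle := Fintype.card_subtype_le (fun i => 0 < hA.eigenvalues i ∨ hA.eigenvalues i < 0)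
  simp only [Set.ncard_eq_toFinset_card', Set.toFinset_ofPred, ← Fintype.card_subtype]
  refine ⟨by omega, by omega, fun i hi => ?_⟩
  have hlt := Fintype.card_subtype_lt
    (p := fun i => 0 < hA.eigenvalues i ∨ hA.eigenvalues i < 0) (x := i) (by simp [hi])
  omega

end Inertia

namespace SimpleGraph

variable {V : Type*} [DecidableEq V] (G : SimpleGraph V)

def IsSimplex (s : Finset V) : Prop := #s = 1 ∨ ∃ a b, G.Adj a b ∧ s = {a, b}

abbrev Simplex : Type _ := {s : Finset V // G.IsSimplex s}

def connectionMatrix : Matrix G.Simplex G.Simplex ℝ :=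
  fun x y => if (x.val ∩ y.val).Nonempty then 1 else 0

def simplexIncMatrix : Matrix V G.Simplex ℝ := fun v s => if v ∈ s.val then 1 else 0

def vertexSimplexMatrix : Matrix G.Simplex V ℝ := fun s v => if s.val = {v} then 1 else 0

variable {G}

lemma IsSimplex.card_eq_one_or_two {s : Finset V} (hs : G.IsSimplex s) : #s = 1 ∨ #s = 2 := by
  rcases hs with h | ⟨a, b, hab, rfl⟩
  · exact Or.inl h
  · exact Or.inr (card_pair hab.ne)

lemma isSimplex_singleton (v : V) : G.IsSimplex {v} := Or.inl (card_singleton v)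

lemma Simplex.card_inter_le_one {s t : G.Simplex} (hst : s ≠ t) : #(s.val ∩ t.val) ≤ 1 := by
  by_contra! h
  have hs : s.val ∩ t.val = s.val := eq_of_subset_of_card_le inter_subset_left
    (by rcases s.2.card_eq_one_or_two with h' | h' <;> omega)
  have ht : s.val ∩ t.val = t.val := eq_of_subset_of_card_le inter_subset_right
    (by rcases t.2.card_eq_one_or_two with h' | h' <;> omega)
  exact hst (Subtype.ext (hs.symm.trans ht))

variable (G)

lemma isHermitian_connectionMatrix : G.connectionMatrix.IsHermitian :=
  isHermitian_iff_isSymm.mpr <| IsSymm.ext fun x y => by simp only [connectionMatrix, inter_comm]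

section

variable [Fintype V]

lemma transpose_mul_simplexIncMatrix_apply (s t : G.Simplex) :
    (G.simplexIncMatrixᵀ * G.simplexIncMatrix) s t = #(s.val ∩ t.val) := by
  simp only [simplexIncMatrix, mul_apply, transpose_apply, mul_ite, mul_one, mul_zero,
    ← ite_and, sum_boole]
  simp [filter_and, and_comm]

theorem connectionMatrix_eq_transpose_mul_sub_diagonal :
    G.connectionMatrix = G.simplexIncMatrixᵀ * G.simplexIncMatrix -
      diagonal fun s => (#s.val : ℝ) - 1 := by
  ext s t
  rw [Matrix.sub_apply, transpose_mul_simplexIncMatrix_apply, diagonal_apply, connectionMatrix]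
  by_cases hst : s = t
  · subst hst
    have hcard : 0 < #s.val := by rcases s.2.card_eq_one_or_two with h | h <;> omega
    simp [card_pos.mp hcard]
  · rw [if_neg hst, sub_zero]
    rcases Nat.le_one_iff_eq_zero_or_eq_one.mp (Simplex.card_inter_le_one hst) with h | h
    · simp [card_eq_zero.mp h]
    · simp [h, ← card_pos]

lemma card_sub_one_mul_vertexSimplexMatrix_mulVec (y : V → ℝ) (s : G.Simplex) :
    ((#s.val : ℝ) - 1) * (G.vertexSimplexMatrix *ᵥ y) s = 0 := by
  rcases s.2.card_eq_one_or_two with h | h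
  · simp [h]
  · have hs : ∀ v, s.val ≠ {v} := fun v hv => by simp [hv] at h
    simp [vertexSimplexMatrix, mulVec, dotProduct, hs]

lemma card_adjacentPairs_eq_card_edgeFinset [DecidableRel G.Adj] :
    Fintype.card {s : Finset V // ∃ a b, G.Adj a b ∧ s = {a, b}} = #G.edgeFinset := by
  have hinj : Function.Injective (Sym2.toFinset : Sym2 V → Finset V) := fun e f h =>
    Sym2.ext fun v => by rw [← Sym2.mem_toFinset, h, Sym2.mem_toFinset]
  rw [Fintype.card_of_subtype (G.edgeFinset.image Sym2.toFinset) fun s => ?_,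
    card_image_of_injective _ hinj]
  simp only [mem_image, mem_edgeFinset]
  constructor
  · rintro ⟨e, he, rfl⟩
    induction e using Sym2.ind with
    | _ a b => exact ⟨a, b, he, Sym2.toFinset_mk_eq⟩
  · rintro ⟨a, b, hab, rfl⟩
    exact ⟨s(a, b), hab, Sym2.toFinset_mk_eq⟩

end

variable [Fintype G.Simplex]

lemma simplexIncMatrix_mul_vertexSimplexMatrix :
    G.simplexIncMatrix * G.vertexSimplexMatrix = 1 := by
  ext w v
  rw [mul_apply, Fintype.sum_eq_single ⟨{v}, isSimplex_singleton v⟩ fun s hs => ?_]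
  · simp [simplexIncMatrix, vertexSimplexMatrix, one_apply]
  · have hsv : s.val ≠ {v} := fun h => hs (Subtype.ext h)
    simp [vertexSimplexMatrix, hsv]

lemma eq_zero_of_simplexIncMatrix_mulVec_eq_zero {x : G.Simplex → ℝ}
    (hx : G.simplexIncMatrix *ᵥ x = 0) (hedge : ∀ s : G.Simplex, #s.val = 2 → x s = 0) :
    x = 0 := by
  funext s
  rcases s.2.card_eq_one_or_two with hs | hs
  · obtain ⟨w, hw⟩ := card_eq_one.mp hs
    have hsum := congrFun hx w
    rw [mulVec, dotProduct, Fintype.sum_eq_single s fun t hts => ?_] at hsum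
    · simpa [simplexIncMatrix, hw] using hsum
    · rcases t.2.card_eq_one_or_two with ht | ht
      · have hwt : w ∉ t.val := fun hwt => hts <| Subtype.ext <| by
          rw [hw, eq_singleton_iff_unique_mem.mpr
            ⟨hwt, fun u hu => card_le_one.mp ht.le u hu w hwt⟩]
        simp [simplexIncMatrix, hwt]
      · simp [hedge t ht]
  · exact hedge s hs

variable [Fintype V]

lemma dotProduct_connectionMatrix_mulVec (x : G.Simplex → ℝ) :
    x ⬝ᵥ (G.connectionMatrix *ᵥ x) = (G.simplexIncMatrix *ᵥ x) ⬝ᵥ (G.simplexIncMatrix *ᵥ x) -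
      ∑ s, ((#s.val : ℝ) - 1) * x s ^ 2 := by
  rw [connectionMatrix_eq_transpose_mul_sub_diagonal, sub_mulVec, dotProduct_sub,
    ← mulVec_mulVec, dotProduct_mulVec, vecMul_transpose]
  simp only [dotProduct, mulVec_diagonal]
  congr 1
  exact sum_congr rfl fun s _ => by ring

lemma dotProduct_connectionMatrix_mulVec_pos_of_mem_range :
    ∀ x ∈ LinearMap.range G.vertexSimplexMatrix.mulVecLin, x ≠ 0 →
      0 < x ⬝ᵥ (G.connectionMatrix *ᵥ x) := by
  rintro _ ⟨y, rfl⟩ hy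
  have hy0 : y ≠ 0 := by rintro rfl; simp at hy
  rw [mulVecLin_apply, dotProduct_connectionMatrix_mulVec, mulVec_mulVec,
    simplexIncMatrix_mul_vertexSimplexMatrix, one_mulVec]
  simp only [sq, ← mul_assoc, card_sub_one_mul_vertexSimplexMatrix_mulVec, zero_mul,
    sum_const_zero, sub_zero]
  exact lt_of_le_of_ne (sum_nonneg fun i _ => mul_self_nonneg (y i))
    (Ne.symm (dotProduct_self_eq_zero.not.mpr hy0))

lemma dotProduct_connectionMatrix_mulVec_neg_of_mem_ker :
    ∀ x ∈ LinearMap.ker G.simplexIncMatrix.mulVecLin, x ≠ 0 →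
      x ⬝ᵥ (G.connectionMatrix *ᵥ x) < 0 := by
  intro x hx hx0
  rw [LinearMap.mem_ker, mulVecLin_apply] at hx
  rw [dotProduct_connectionMatrix_mulVec, hx, zero_dotProduct, zero_sub, neg_neg_iff_pos]
  have hterm : ∀ s : G.Simplex, 0 ≤ ((#s.val : ℝ) - 1) * x s ^ 2 := fun s => by
    rcases s.2.card_eq_one_or_two with h | h <;> simp [h, sq_nonneg]
  refine lt_of_le_of_ne (sum_nonneg fun s _ => hterm s) fun hsum => hx0 ?_
  refine eq_zero_of_simplexIncMatrix_mulVec_eq_zero G hx fun s hs => ?_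
  have hs0 := (sum_eq_zero_iff_of_nonneg fun s _ => hterm s).mp hsum.symm s (mem_univ s)
  norm_num [hs] at hs0
  exact hs0

lemma finrank_range_vertexSimplexMatrix :
    finrank ℝ (LinearMap.range G.vertexSimplexMatrix.mulVecLin) = Fintype.card V := by
  rw [LinearMap.finrank_range_of_inj, finrank_fintype_fun_eq_card]
  intro y z h
  simpa [mulVec_mulVec, simplexIncMatrix_mul_vertexSimplexMatrix] using
    congrArg (G.simplexIncMatrix *ᵥ ·) h

lemma card_add_finrank_ker_simplexIncMatrix :
    Fintype.card V + finrank ℝ (LinearMap.ker G.simplexIncMatrix.mulVecLin) =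
      Fintype.card G.Simplex := by
  have hsurj : LinearMap.range G.simplexIncMatrix.mulVecLin = ⊤ :=
    LinearMap.range_eq_top.mpr fun y => ⟨G.vertexSimplexMatrix *ᵥ y, by
      simp [mulVec_mulVec, simplexIncMatrix_mul_vertexSimplexMatrix]⟩
  have := LinearMap.finrank_range_add_finrank_ker G.simplexIncMatrix.mulVecLin
  rwa [hsurj, finrank_top, finrank_fintype_fun_eq_card, finrank_fintype_fun_eq_card] at this

variable [DecidableRel G.Adj]

lemma card_simplex : Fintype.card G.Simplex = Fintype.card V + #G.edgeFinset := by
  have hdisj : Disjoint (fun s : Finset V => #s = 1) (fun s => ∃ a b, G.Adj a b ∧ s = {a, b}) := by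
    rintro p h1 h2 s hs
    obtain ⟨a, b, hab, hsab⟩ := h2 s hs
    simpa [hsab, card_pair hab.ne] using h1 s hs
  calc Fintype.card G.Simplex
      = Fintype.card {s : Finset V // #s = 1 ∨ ∃ a b, G.Adj a b ∧ s = {a, b}} :=
        Fintype.card_congr (Equiv.refl _)
    _ = Fintype.card V + #G.edgeFinset := by
        rw [Fintype.card_subtype_or_disjoint _ _ hdisj, Fintype.card_finset_len,
          Nat.choose_one_right, card_adjacentPairs_eq_card_edgeFinset]

theorem connectionMatrix_inertia [DecidableEq G.Simplex] (hL : G.connectionMatrix.IsHermitian) :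
    {i | 0 < hL.eigenvalues i}.ncard = Fintype.card V ∧
      {i | hL.eigenvalues i < 0}.ncard = #G.edgeFinset ∧ ∀ i, hL.eigenvalues i ≠ 0 := by
  have hdim := G.card_add_finrank_ker_simplexIncMatrix
  obtain ⟨hpos, hneg, hzero⟩ := hL.inertia_of_finrank_add_finrank_eq_card _ _
    G.dotProduct_connectionMatrix_mulVec_pos_of_mem_range
    G.dotProduct_connectionMatrix_mulVec_neg_of_mem_ker
    (by rw [finrank_range_vertexSimplexMatrix, hdim])
  rw [card_simplex] at hdim
  exact ⟨hpos.trans G.finrank_range_vertexSimplexMatrix, hneg.trans (by omega), hzero⟩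

end SimpleGraph

/-- The connection matrix of the Möbius–Kantor graph has exactly 16 positive and 24
negative eigenvalues and no zero eigenvalue; its signature `16 - 24 = -8` is the Euler
characteristic `|V| - |E|` of `MK`. -/
theorem connection_matrix_signature_moebiusKantor :
    ∃ hH : connLR.IsHermitian,
      {i : MKSimplex | 0 < hH.eigenvalues i}.ncard = 16 ∧
      {i : MKSimplex | hH.eigenvalues i < 0}.ncard = 24 ∧
      (∀ i : MKSimplex, hH.eigenvalues i ≠ 0) ∧
      (16 : ℤ) - 24 =
        (Fintype.card (ZMod 8 × Fin 2) : ℤ) - MK.edgeFinset.card := by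
  refine ⟨MK.isHermitian_connectionMatrix, ?_⟩
  -- `MK.Simplex` is `MKSimplex`; its eigenvalues must be computed with the instances of the latter.
  let _ : Fintype MK.Simplex := inferInstanceAs (Fintype MKSimplex)
  let _ : DecidableEq MK.Simplex := inferInstanceAs (DecidableEq MKSimplex)
  obtain ⟨hpos, hneg, hzero⟩ := MK.connectionMatrix_inertia MK.isHermitian_connectionMatrix
  have hV : Fintype.card (ZMod 8 × Fin 2) = 16 := rfl
  have hE : #MK.edgeFinset = 24 := by decide
  exact ⟨hpos.trans hV, hneg.trans hE, hzero, by rw [hV, hE]; norm_num⟩
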